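/- arXiv:0804.2405 — 4 statements merged into one kernel-verified Lean document; each statement's English description precedes it below -/
import Mathlib

section
/- Let u_t be a one-parameter family in a group satisfying the σ-cocycle identity u_{s+t} = u_s · σ_s(u_t) for a one-parameter group of automorphisms σ, and suppose for all t one has the identity Δ(u_t)·(τ_t ⊗ σ_t)(Ω*) = Ω*·(v_t ⊗ u_t) for elements v_t, where Δ is multiplicative, τ is a one-parameter automorphism group commuting appropriately, Ω is unitary, and (τ_t ⊗ σ_t) are automorphisms of the tensor product with (τ_{s+t} ⊗ σ_{s+t}) = (τ_s ⊗ σ_s)(τ_t ⊗ σ_t). Then v_t satisfies the τ-cocycle identity v_{s+t} = v_s · τ_s(v_t). -/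
/-!
Conjugating by `Ω` turns the `(τ ⊗ σ)`-cocycle `t ↦ Δ(u_t)` into `t ↦ v_t ⊗ u_t`, which is therefore
again a `(τ ⊗ σ)`-cocycle. Comparing `v_{s+t} ⊗ u_{s+t}` with
`(v_s ⊗ u_s)(τ_s(v_t) ⊗ σ_s(u_t)) = v_s τ_s(v_t) ⊗ u_{s+t}` and cancelling the invertible right
leg `u_{s+t}` gives the claim.
-/

open TensorProduct

section Cocycle

variable {G B F : Type*} [Add G] [Monoid B] [FunLike F B B]

def IsMulCocycle (α : G → F) (w : G → B) : Prop :=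
  ∀ s t, w (s + t) = w s * α s (w t)

theorem IsMulCocycle.comp {C F' : Type*} [Monoid C] [FunLike F' C C] {α : G → F} {β : G → F'}
    {w : G → B} (hw : IsMulCocycle α w)
    {Φ : Type*} [FunLike Φ B C] [MonoidHomClass Φ B C] (f : Φ)
    (hf : ∀ s x, f (α s x) = β s (f x)) : IsMulCocycle β (f ∘ w) := by
  intro s t
  simp only [Function.comp_apply, hw s t, map_mul, hf]

theorem IsMulCocycle.of_mul_eq_mul [MonoidHomClass F B B] {α : G → F}
    (hα : ∀ s t x, α (s + t) x = α s (α t x))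
    {w z : G → B} (hw : IsMulCocycle α w) {Ω Ω' : B} (hΩ : Ω' * Ω = 1)
    (hwz : ∀ t, w t * α t Ω = Ω * z t) : IsMulCocycle α z := by
  intro s t
  have hcancel : ∀ a b : B, Ω * a = Ω * b → a = b := fun a b h => by
    simpa [← mul_assoc, hΩ] using congrArg (Ω' * ·) h
  apply hcancel
  calc Ω * z (s + t) = w s * α s (w t * α t Ω) := by rw [← hwz, hw, hα, map_mul, mul_assoc]
    _ = Ω * (z s * α s (z t)) := by rw [hwz, map_mul, ← mul_assoc, hwz, mul_assoc]

end Cocycle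

theorem TensorProduct.tmul_left_injective_of_isUnit {R A : Type*} [CommSemiring R] [Semiring A]
    [Algebra R A] {u : A} (hu : IsUnit u) : Function.Injective (fun x : A => x ⊗ₜ[R] u) := by
  obtain ⟨U, rfl⟩ := hu
  intro x y hxy
  have recover :
      ∀ a : A, LinearMap.mul' R A (a ⊗ₜ[R] (U : A) * ((1 : A) ⊗ₜ[R] (↑U⁻¹ : A))) = a := by
    simp [Algebra.TensorProduct.tmul_mul_tmul, LinearMap.mul'_apply]
  rw [← recover x, ← recover y]
  exact congrArg (fun z => LinearMap.mul' R A (z * ((1 : A) ⊗ₜ[R] (↑U⁻¹ : A)))) hxy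

theorem Algebra.TensorProduct.map_add_apply {R A B G : Type*} [CommSemiring R] [Semiring A]
    [Algebra R A] [Semiring B] [Algebra R B] [Add G] (f : G → A →ₐ[R] A) (g : G → B →ₐ[R] B)
    (hf : ∀ s t x, f (s + t) x = f s (f t x)) (hg : ∀ s t x, g (s + t) x = g s (g t x))
    (s t : G) (x : A ⊗[R] B) :
    map (f (s + t)) (g (s + t)) x = map (f s) (g s) (map (f t) (g t) x) := by
  rw [show f (s + t) = (f s).comp (f t) from AlgHom.ext (hf s t),
    show g (s + t) = (g s).comp (g t) from AlgHom.ext (hg s t), map_comp]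
  rfl

theorem v_is_tau_cocycle_general (M : Type*) [Ring M] [Algebra ℂ M]
    (Δ : M →ₐ[ℂ] M ⊗[ℂ] M)
    (σ τ : ℝ → (M ≃ₐ[ℂ] M))
    (hσgrp : ∀ s t : ℝ, ∀ x : M, σ (s + t) x = σ s (σ t x))
    (hτgrp : ∀ s t : ℝ, ∀ x : M, τ (s + t) x = τ s (τ t x))
    (Ωs Ωsinv : M ⊗[ℂ] M) (hΩ' : Ωsinv * Ωs = 1)
    (u v : ℝ → M)
    (hu_unit : ∀ t, IsUnit (u t))
    (hu : ∀ s t : ℝ, u (s + t) = u s * σ s (u t))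
    (hΔσ : ∀ (s : ℝ) (x : M),
      Δ (σ s x) = (Algebra.TensorProduct.map (τ s).toAlgHom (σ s).toAlgHom) (Δ x))
    (hmain : ∀ t : ℝ,
      Δ (u t) * (Algebra.TensorProduct.map (τ t).toAlgHom (σ t).toAlgHom) Ωs
        = Ωs * ((v t) ⊗ₜ[ℂ] (u t))) :
    ∀ s t : ℝ, v (s + t) = v s * τ s (v t) := by
  intro s t
  let F : ℝ → (M ⊗[ℂ] M →ₐ[ℂ] M ⊗[ℂ] M) := fun r => Algebra.TensorProduct.map (τ r) (σ r)
  have hF : ∀ s t x, F (s + t) x = F s (F t x) :=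
    Algebra.TensorProduct.map_add_apply (fun r => (τ r).toAlgHom) (fun r => (σ r).toAlgHom)
      hτgrp hσgrp
  have hΔu : IsMulCocycle F (Δ ∘ u) := IsMulCocycle.comp (α := σ) hu Δ hΔσ
  have hvu : IsMulCocycle F (fun r => v r ⊗ₜ[ℂ] u r) := hΔu.of_mul_eq_mul hF hΩ' hmain
  apply TensorProduct.tmul_left_injective_of_isUnit (R := ℂ) (hu_unit (s + t))
  simpa [F, Algebra.TensorProduct.tmul_mul_tmul, ← hu] using hvu s t

/-- Suppose `u_{s+t} = u_s σ_s(u_t)` (a `σ`-cocycle of unitaries),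
`Δ(u_t)·(τ_t ⊗ σ_t)(Ω*) = Ω*·(v_t ⊗ u_t)` for all `t`, where `Δ` is multiplicative,
`Δ ∘ σ_s = (τ_s ⊗ σ_s) ∘ Δ`, and `Ω*` is unitary (invertible).  Then `v` satisfies the
`τ`-cocycle identity `v_{s+t} = v_s τ_s(v_t)`. -/
theorem v_is_tau_cocycle (M : Type*) [Ring M] [Algebra ℂ M] [Nontrivial M]
    (Δ : M →ₐ[ℂ] M ⊗[ℂ] M)
    (σ τ : ℝ → (M ≃ₐ[ℂ] M))
    (hσgrp : ∀ s t : ℝ, ∀ x : M, σ (s + t) x = σ s (σ t x))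
    (hτgrp : ∀ s t : ℝ, ∀ x : M, τ (s + t) x = τ s (τ t x))
    (Ωs Ωsinv : M ⊗[ℂ] M) (hΩ : Ωs * Ωsinv = 1) (hΩ' : Ωsinv * Ωs = 1)
    (u v : ℝ → M)
    (hu_unit : ∀ t, IsUnit (u t)) (hv_unit : ∀ t, IsUnit (v t))
    (hu : ∀ s t : ℝ, u (s + t) = u s * σ s (u t))
    (hΔσ : ∀ (s : ℝ) (x : M),
      Δ (σ s x) = (Algebra.TensorProduct.map (τ s).toAlgHom (σ s).toAlgHom) (Δ x))
    (hmain : ∀ t : ℝ,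
      Δ (u t) * (Algebra.TensorProduct.map (τ t).toAlgHom (σ t).toAlgHom) Ωs
        = Ωs * ((v t) ⊗ₜ[ℂ] (u t))) :
    ∀ s t : ℝ, v (s + t) = v s * τ s (v t) :=
  v_is_tau_cocycle_general M Δ σ τ hσgrp hτgrp Ωs Ωsinv hΩ' u v hu_unit hu hΔσ hmain
end

section
/- Let G̃ be a unitary H_N ⊗ H_N → H_M ⊗ H_N satisfying the mixed pentagon equation Ŵ₁₂ G̃₁₃ G̃₂₃ = G̃₂₃ G̃₁₂ with a multiplicative unitary Ŵ, and suppose Ŵ*(Jδ^{it}J ⊗ 1)Ŵ = Jδ^{it}J ⊗ δ^{it} for a one-parameter family of unitaries δ^{it}. Define H^{it} := G̃*(Jδ^{it}J ⊗ 1)G̃ and suppose H^{it} = h^{it} ⊗ k^{it} for one-parameter unitary groups h^{it}, k^{it}. Then, setting α^op(x) := G̃(x ⊗ 1)G̃*, one has (ι ⊗ α^op)(H^{it}) = h^{it} ⊗ δ^{it} ⊗ k^{it}. -/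
/-! Write `X = Jδ^{it}J ⊗ 1` on the first leg.  The hypotheses say that `Ŵ` and `G̃` intertwine `X`
with `Jδ^{it}J ⊗ δ^{it}` and with `h^{it} ⊗ k^{it}` respectively.  Pushing `X₁` through both sides
of the mixed pentagon equation, factor by factor, gives
`Ŵ₁₂ G̃₁₃ (h^{it} ⊗ δ^{it} ⊗ k^{it}) G̃₂₃ = Ŵ₁₂ G̃₁₃ G̃₂₃ (h^{it} ⊗ k^{it} ⊗ 1)`;
cancelling the invertible `Ŵ₁₂ G̃₁₃` leaves `G̃₂₃ H^{it}₁₂ G̃₂₃* = h^{it} ⊗ δ^{it} ⊗ k^{it}`. -/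

open TensorProduct

noncomputable section

variable {A B C D : Type*}
  [AddCommGroup A] [Module ℂ A] [AddCommGroup B] [Module ℂ B]
  [AddCommGroup C] [Module ℂ C] [AddCommGroup D] [Module ℂ D]

/-- Place an operator `f : A ⊗ B → C ⊗ D` on legs 1 and 2, bystander `E` on leg 3. -/
def leg12 (f : A ⊗[ℂ] B →ₗ[ℂ] C ⊗[ℂ] D) (E : Type*) [AddCommGroup E] [Module ℂ E] :
    A ⊗[ℂ] (B ⊗[ℂ] E) →ₗ[ℂ] C ⊗[ℂ] (D ⊗[ℂ] E) :=
  (TensorProduct.assoc ℂ C D E).toLinearMap ∘ₗ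
    (TensorProduct.map f LinearMap.id) ∘ₗ (TensorProduct.assoc ℂ A B E).symm.toLinearMap

/-- Place an operator `f : A ⊗ B → C ⊗ D` on legs 1 and 3, bystander `E` on leg 2. -/
def leg13 (f : A ⊗[ℂ] B →ₗ[ℂ] C ⊗[ℂ] D) (E : Type*) [AddCommGroup E] [Module ℂ E] :
    A ⊗[ℂ] (E ⊗[ℂ] B) →ₗ[ℂ] C ⊗[ℂ] (E ⊗[ℂ] D) :=
  (LinearMap.lTensor C (TensorProduct.comm ℂ D E).toLinearMap) ∘ₗ
    leg12 f E ∘ₗ (LinearMap.lTensor A (TensorProduct.comm ℂ E B).toLinearMap)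

section Intertwining

variable {R M N : Type*} [CommSemiring R] [AddCommMonoid M] [Module R M]
  [AddCommMonoid N] [Module R N] {u : M →ₗ[R] N} {v : N →ₗ[R] M} {a : N →ₗ[R] N} {b : M →ₗ[R] M}

theorem comp_eq_comp_of_conj_eq (huv : u ∘ₗ v = LinearMap.id) (h : v ∘ₗ a ∘ₗ u = b) :
    a ∘ₗ u = u ∘ₗ b := by
  rw [← h, ← LinearMap.comp_assoc, huv, LinearMap.id_comp]

theorem conj_eq_of_comp_eq_comp (huv : u ∘ₗ v = LinearMap.id) (h : a ∘ₗ u = u ∘ₗ b) :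
    u ∘ₗ b ∘ₗ v = a := by
  rw [← LinearMap.comp_assoc, ← h, LinearMap.comp_assoc, huv, LinearMap.comp_id]

end Intertwining

section Legs

variable (E : Type*) [AddCommGroup E] [Module ℂ E]

theorem leg12_id : leg12 (LinearMap.id : A ⊗[ℂ] B →ₗ[ℂ] A ⊗[ℂ] B) E = LinearMap.id := by
  ext; simp [leg12]

theorem leg13_id : leg13 (LinearMap.id : A ⊗[ℂ] B →ₗ[ℂ] A ⊗[ℂ] B) E = LinearMap.id := by
  ext; simp [leg13, leg12]

variable {A' B' : Type*} [AddCommGroup A'] [Module ℂ A'] [AddCommGroup B'] [Module ℂ B']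

theorem leg12_comp (f : A' ⊗[ℂ] B' →ₗ[ℂ] C ⊗[ℂ] D) (g : A ⊗[ℂ] B →ₗ[ℂ] A' ⊗[ℂ] B') :
    leg12 (f ∘ₗ g) E = leg12 f E ∘ₗ leg12 g E := by
  ext; simp [leg12]

theorem leg13_comp (f : A' ⊗[ℂ] B' →ₗ[ℂ] C ⊗[ℂ] D) (g : A ⊗[ℂ] B →ₗ[ℂ] A' ⊗[ℂ] B') :
    leg13 (f ∘ₗ g) E = leg13 f E ∘ₗ leg13 g E := by
  ext; simp [leg13, leg12_comp, ← LinearMap.lTensor_comp_apply]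

theorem leg12_map (f : A →ₗ[ℂ] C) (g : B →ₗ[ℂ] D) :
    leg12 (TensorProduct.map f g) E = TensorProduct.map f (g.rTensor E) := by
  ext; simp [leg12]

theorem leg13_map (f : A →ₗ[ℂ] C) (g : B →ₗ[ℂ] D) :
    leg13 (TensorProduct.map f g) E = TensorProduct.map f (g.lTensor E) := by
  ext; simp [leg13, leg12]

theorem leg12_rTensor (f : A →ₗ[ℂ] C) : leg12 (f.rTensor B) E = f.rTensor (B ⊗[ℂ] E) := by
  ext; simp [leg12]

theorem leg13_rTensor (f : A →ₗ[ℂ] C) : leg13 (f.rTensor B) E = f.rTensor (E ⊗[ℂ] B) := by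
  ext; simp [leg13, leg12]

theorem leg13_comp_lTensor_rTensor {E' : Type*} [AddCommGroup E'] [Module ℂ E']
    (f : A ⊗[ℂ] B →ₗ[ℂ] C ⊗[ℂ] D) (g : E →ₗ[ℂ] E') :
    leg13 f E' ∘ₗ (g.rTensor B).lTensor A = (g.rTensor D).lTensor C ∘ₗ leg13 f E := by
  have natural (x : C ⊗[ℂ] D) (e : E) :
      (TensorProduct.comm ℂ D E').toLinearMap.lTensor C (TensorProduct.assoc ℂ C D E' (x ⊗ₜ g e))
        = (g.rTensor D).lTensor C ((TensorProduct.comm ℂ D E).toLinearMap.lTensor C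
            (TensorProduct.assoc ℂ C D E (x ⊗ₜ e))) := by
    induction x using TensorProduct.induction_on <;> simp_all [TensorProduct.add_tmul]
  ext a e b
  simpa [leg13, leg12] using natural (f (a ⊗ₜ b)) e

end Legs

section MixedPentagon

variable {M N : Type*} [AddCommGroup M] [Module ℂ M] [AddCommGroup N] [Module ℂ N]
  {W : M ⊗[ℂ] M →ₗ[ℂ] M ⊗[ℂ] M} {G : N ⊗[ℂ] N →ₗ[ℂ] M ⊗[ℂ] N}
  {x δ : M →ₗ[ℂ] M} {h k : N →ₗ[ℂ] N}

theorem injective_leg12_comp_leg13 {W' : M ⊗[ℂ] M →ₗ[ℂ] M ⊗[ℂ] M} {G' : M ⊗[ℂ] N →ₗ[ℂ] N ⊗[ℂ] N}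
    (hW : W' ∘ₗ W = LinearMap.id) (hG : G' ∘ₗ G = LinearMap.id) :
    Function.Injective (leg12 W N ∘ₗ leg13 G M) := by
  refine LinearMap.injective_of_comp_eq_id _ (leg13 G' M ∘ₗ leg12 W' N) ?_
  rw [LinearMap.comp_assoc, ← LinearMap.comp_assoc (leg13 G M), ← leg12_comp, hW, leg12_id,
    LinearMap.id_comp, ← leg13_comp, hG, leg13_id]

theorem rTensor_comp_lTensor_comp_leg12 (hG : x.rTensor N ∘ₗ G = G ∘ₗ TensorProduct.map h k) :
    x.rTensor (M ⊗[ℂ] N) ∘ₗ G.lTensor M ∘ₗ leg12 G N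
      = G.lTensor M ∘ₗ leg12 G N ∘ₗ leg12 (TensorProduct.map h k) N := by
  rw [← LinearMap.comp_assoc, LinearMap.rTensor_comp_lTensor, ← LinearMap.lTensor_comp_rTensor,
    LinearMap.comp_assoc, ← leg12_rTensor, ← leg12_comp, hG, leg12_comp]

theorem rTensor_comp_leg12_comp_leg13 (hW : x.rTensor M ∘ₗ W = W ∘ₗ TensorProduct.map x δ)
    (hG : x.rTensor N ∘ₗ G = G ∘ₗ TensorProduct.map h k) :
    x.rTensor (M ⊗[ℂ] N) ∘ₗ leg12 W N ∘ₗ leg13 G M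
      = leg12 W N ∘ₗ leg13 G M ∘ₗ TensorProduct.map h (TensorProduct.map δ k) := by
  calc x.rTensor (M ⊗[ℂ] N) ∘ₗ leg12 W N ∘ₗ leg13 G M
      = leg12 W N ∘ₗ x.rTensor (M ⊗[ℂ] N) ∘ₗ (δ.rTensor N).lTensor M ∘ₗ leg13 G M := by
        rw [← LinearMap.comp_assoc, ← leg12_rTensor, ← leg12_comp, hW, leg12_comp, leg12_map,
          ← LinearMap.rTensor_comp_lTensor, leg12_rTensor]
        simp only [LinearMap.comp_assoc]
    _ = leg12 W N ∘ₗ leg13 (G ∘ₗ TensorProduct.map h k) M ∘ₗ (δ.rTensor N).lTensor N := by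
        rw [← leg13_comp_lTensor_rTensor, ← hG, leg13_comp, leg13_rTensor]
        simp only [LinearMap.comp_assoc]
    _ = leg12 W N ∘ₗ leg13 G M ∘ₗ TensorProduct.map h (TensorProduct.map δ k) := by
        rw [leg13_comp, leg13_map, LinearMap.comp_assoc, LinearMap.map_comp_lTensor,
          LinearMap.lTensor_comp_rTensor]

end MixedPentagon

theorem iota_alpha_of_Hit_general {Hm Hn : Type*}
    [AddCommGroup Hm] [Module ℂ Hm] [AddCommGroup Hn] [Module ℂ Hn]
    (What Whatstar : Hm ⊗[ℂ] Hm →ₗ[ℂ] Hm ⊗[ℂ] Hm)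
    (hW1 : What ∘ₗ Whatstar = LinearMap.id) (hW2 : Whatstar ∘ₗ What = LinearMap.id)
    (G : Hn ⊗[ℂ] Hn →ₗ[ℂ] Hm ⊗[ℂ] Hn) (Gstar : Hm ⊗[ℂ] Hn →ₗ[ℂ] Hn ⊗[ℂ] Hn)
    (hG1 : G ∘ₗ Gstar = LinearMap.id) (hG2 : Gstar ∘ₗ G = LinearMap.id)
    (hmixedpent : leg12 What Hn ∘ₗ leg13 G Hm ∘ₗ LinearMap.lTensor Hn G
      = LinearMap.lTensor Hm G ∘ₗ leg12 G Hn)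
    (D JD : ℝ → (Hm →ₗ[ℂ] Hm)) (h k : ℝ → (Hn →ₗ[ℂ] Hn))
    (hWconj : ∀ t : ℝ,
      Whatstar ∘ₗ TensorProduct.map (JD t) LinearMap.id ∘ₗ What
        = TensorProduct.map (JD t) (D t))
    (hHit : ∀ t : ℝ,
      Gstar ∘ₗ TensorProduct.map (JD t) LinearMap.id ∘ₗ G
        = TensorProduct.map (h t) (k t)) :
    ∀ t : ℝ,
      LinearMap.lTensor Hn G ∘ₗ leg12 (TensorProduct.map (h t) (k t)) Hn ∘ₗ
          LinearMap.lTensor Hn Gstar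
        = TensorProduct.map (h t) (TensorProduct.map (D t) (k t)) := by
  intro t
  have hXW := comp_eq_comp_of_conj_eq hW1 (hWconj t)
  have hXG := comp_eq_comp_of_conj_eq hG1 (hHit t)
  have key : G.lTensor Hn ∘ₗ leg12 (map (h t) (k t)) Hn
      = map (h t) (map (D t) (k t)) ∘ₗ G.lTensor Hn := by
    refine (LinearMap.cancel_left (injective_leg12_comp_leg13 hW2 hG2)).1 ?_
    calc (leg12 What Hn ∘ₗ leg13 G Hm) ∘ₗ G.lTensor Hn ∘ₗ leg12 (map (h t) (k t)) Hn
        = (G.lTensor Hm ∘ₗ leg12 G Hn) ∘ₗ leg12 (map (h t) (k t)) Hn := by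
          rw [← hmixedpent]; simp only [LinearMap.comp_assoc]
      _ = (JD t).rTensor (Hm ⊗[ℂ] Hn) ∘ₗ G.lTensor Hm ∘ₗ leg12 G Hn := by
          rw [LinearMap.comp_assoc, rTensor_comp_lTensor_comp_leg12 hXG]
      _ = ((JD t).rTensor (Hm ⊗[ℂ] Hn) ∘ₗ leg12 What Hn ∘ₗ leg13 G Hm) ∘ₗ G.lTensor Hn := by
          rw [← hmixedpent]; simp only [LinearMap.comp_assoc]
      _ = (leg12 What Hn ∘ₗ leg13 G Hm) ∘ₗ map (h t) (map (D t) (k t)) ∘ₗ G.lTensor Hn := by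
          rw [rTensor_comp_leg12_comp_leg13 hXW hXG]; simp only [LinearMap.comp_assoc]
  refine conj_eq_of_comp_eq_comp ?_ key.symm
  rw [← LinearMap.lTensor_comp, hG1, LinearMap.lTensor_id]

/-- Let `G̃ : H_N ⊗ H_N → H_M ⊗ H_N` be a unitary satisfying the mixed
pentagon equation `Ŵ₁₂ G̃₁₃ G̃₂₃ = G̃₂₃ G̃₁₂` with a multiplicative unitary `Ŵ`, and
suppose `Ŵ*(Jδ^{it}J ⊗ 1)Ŵ = Jδ^{it}J ⊗ δ^{it}`.  Define
`H^{it} := G̃*(Jδ^{it}J ⊗ 1)G̃` and assume `H^{it} = h^{it} ⊗ k^{it}`.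
Then with `α^op(x) := G̃(x ⊗ 1)G̃*`, one has
`(ι ⊗ α^op)(H^{it}) = h^{it} ⊗ δ^{it} ⊗ k^{it}`. -/
theorem iota_alpha_of_Hit {Hm Hn : Type*}
    [AddCommGroup Hm] [Module ℂ Hm] [AddCommGroup Hn] [Module ℂ Hn]
    (What Whatstar : Hm ⊗[ℂ] Hm →ₗ[ℂ] Hm ⊗[ℂ] Hm)
    (hW1 : What ∘ₗ Whatstar = LinearMap.id) (hW2 : Whatstar ∘ₗ What = LinearMap.id)
    (hWpent : leg12 What Hm ∘ₗ leg13 What Hm ∘ₗ LinearMap.lTensor Hm What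
      = LinearMap.lTensor Hm What ∘ₗ leg12 What Hm)
    (G : Hn ⊗[ℂ] Hn →ₗ[ℂ] Hm ⊗[ℂ] Hn) (Gstar : Hm ⊗[ℂ] Hn →ₗ[ℂ] Hn ⊗[ℂ] Hn)
    (hG1 : G ∘ₗ Gstar = LinearMap.id) (hG2 : Gstar ∘ₗ G = LinearMap.id)
    (hmixedpent : leg12 What Hn ∘ₗ leg13 G Hm ∘ₗ LinearMap.lTensor Hn G
      = LinearMap.lTensor Hm G ∘ₗ leg12 G Hn)
    (D JD : ℝ → (Hm →ₗ[ℂ] Hm)) (h k : ℝ → (Hn →ₗ[ℂ] Hn))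
    (hDgrp : ∀ s t : ℝ, D (s + t) = D s ∘ₗ D t) (hD0 : D 0 = LinearMap.id)
    (hJDgrp : ∀ s t : ℝ, JD (s + t) = JD s ∘ₗ JD t) (hJD0 : JD 0 = LinearMap.id)
    (hhgrp : ∀ s t : ℝ, h (s + t) = h s ∘ₗ h t) (hh0 : h 0 = LinearMap.id)
    (hkgrp : ∀ s t : ℝ, k (s + t) = k s ∘ₗ k t) (hk0 : k 0 = LinearMap.id)
    (hWconj : ∀ t : ℝ,
      Whatstar ∘ₗ TensorProduct.map (JD t) LinearMap.id ∘ₗ What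
        = TensorProduct.map (JD t) (D t))
    (hHit : ∀ t : ℝ,
      Gstar ∘ₗ TensorProduct.map (JD t) LinearMap.id ∘ₗ G
        = TensorProduct.map (h t) (k t)) :
    ∀ t : ℝ,
      LinearMap.lTensor Hn G ∘ₗ leg12 (TensorProduct.map (h t) (k t)) Hn ∘ₗ
          LinearMap.lTensor Hn Gstar
        = TensorProduct.map (h t) (TensorProduct.map (D t) (k t)) :=
  iota_alpha_of_Hit_general What Whatstar hW1 hW2 G Gstar hG1 hG2 hmixedpent D JD h k hWconj hHit

end
end

section
/- Let Ω ∈ M ⊗ M be a unitary 2-cocycle for a Hopf–von Neumann algebra (M, Δ), i.e. (1 ⊗ Ω)(ι ⊗ Δ)(Ω) = (Ω ⊗ 1)(Δ ⊗ ι)(Ω). Suppose R : M → M is an antimultiplicative ⋆-involution with Δ ∘ R = (R ⊗ R) ∘ Δ^op, and suppose there exists a unitary X ∈ M such that Ω*·(X ⊗ X) = Δ(X)·Ω̃*, where Ω̃ := (R ⊗ R)(Σ Ω* Σ) and Σ denotes the tensor flip. Then Ω̃ is also a unitary 2-cocycle, and Ω and Ω̃ are cohomologous in the sense that the map m ↦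 Ω̃ Δ(m) Ω̃* equals the map m ↦ (X* ⊗ X*)·Ω Δ(XmX*) Ω*·(X ⊗ X). -/
open TensorProduct

private theorem tp_map_mul {A B C D : Type*} [Ring A] [Ring B] [Ring C] [Ring D]
    [Algebra ℂ A] [Algebra ℂ B] [Algebra ℂ C] [Algebra ℂ D]
    (f : A →ₗ[ℂ] C) (g : B →ₗ[ℂ] D)
    (hf : ∀ x y : A, f (x * y) = f x * f y) (hg : ∀ x y : B, g (x * y) = g x * g y)
    (x y : A ⊗[ℂ] B) :
    TensorProduct.map f g (x * y)
      = TensorProduct.map f g x * TensorProduct.map f g y := by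
  induction x using TensorProduct.induction_on with
  | zero => simp
  | tmul a b =>
    induction y using TensorProduct.induction_on with
    | zero => simp
    | tmul c d => simp [Algebra.TensorProduct.tmul_mul_tmul, hf, hg]
    | add u v hu hv => simp only [mul_add, add_mul, map_add, hu, hv]
  | add u v hu hv => simp only [mul_add, add_mul, map_add, hu, hv]

private theorem tp_swap_antimul {A B C D : Type*} [Ring A] [Ring B] [Ring C] [Ring D]
    [Algebra ℂ A] [Algebra ℂ B] [Algebra ℂ C] [Algebra ℂ D]
    (f : A →ₗ[ℂ] C) (g : B →ₗ[ℂ] D)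
    (hf : ∀ x y : A, f (x * y) = f y * f x) (hg : ∀ x y : B, g (x * y) = g y * g x)
    (x y : A ⊗[ℂ] B) :
    TensorProduct.map g f ((TensorProduct.comm ℂ A B) (x * y))
      = TensorProduct.map g f ((TensorProduct.comm ℂ A B) y)
        * TensorProduct.map g f ((TensorProduct.comm ℂ A B) x) := by
  induction x using TensorProduct.induction_on with
  | zero => simp
  | tmul a b =>
    induction y using TensorProduct.induction_on with
    | zero => simp
    | tmul c d => simp [Algebra.TensorProduct.tmul_mul_tmul, hf, hg]
    | add u v hu hv => simp only [mul_add, add_mul, map_add, hu, hv]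
  | add u v hu hv => simp only [mul_add, add_mul, map_add, hu, hv]

set_option maxHeartbeats 1000000 in
set_option synthInstance.maxHeartbeats 400000 in
/-- Let `Ω` be a unitary 2-cocycle for a Hopf–von Neumann algebra
`(M, Δ)`, `R` an antimultiplicative ⋆-involution with `Δ ∘ R = (R ⊗ R) ∘ Δ^op`, and let
`X` be a unitary with `Ω*(X ⊗ X) = Δ(X)·Ω̃*`, where `Ω̃ := (R ⊗ R)(Σ Ω* Σ)`.
Then `Ω̃` is a 2-cocycle and the twisted comultiplications `Δ_Ω` and `Δ_{Ω̃}` are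
conjugate: `Δ_{Ω̃}(m) = (X* ⊗ X*) Δ_Ω(X m X*) (X ⊗ X)`.  (For unitaries, adjoints are
realized as inverses.) -/
theorem cocycle_R_twist_cohomologous (M : Type*) [Ring M] [Algebra ℂ M] [StarRing M]
    (Δ : M →ₐ[ℂ] M ⊗[ℂ] M)
    (hcoassoc : ∀ x : M,
      (TensorProduct.assoc ℂ M M M)
          ((TensorProduct.map Δ.toLinearMap LinearMap.id) (Δ x))
        = (TensorProduct.map LinearMap.id Δ.toLinearMap) (Δ x))
    (R : M →ₗ[ℂ] M)
    (hR_antimul : ∀ x y : M, R (x * y) = R y * R x)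
    (hR_one : R 1 = 1)
    (hR_invol : ∀ x : M, R (R x) = x)
    (hR_star : ∀ x : M, R (star x) = star (R x))
    (hΔR : ∀ x : M,
      Δ (R x) = (TensorProduct.map R R) ((TensorProduct.comm ℂ M M) (Δ x)))
    (Ω Ωinv : M ⊗[ℂ] M) (hΩ : Ω * Ωinv = 1) (hΩ' : Ωinv * Ω = 1)
    (hcocycle :
      ((1 : M) ⊗ₜ[ℂ] Ω) * (TensorProduct.map LinearMap.id Δ.toLinearMap Ω)
        = (TensorProduct.assoc ℂ M M M)
            ((Ω ⊗ₜ[ℂ] (1 : M)) * (TensorProduct.map Δ.toLinearMap LinearMap.id Ω)))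
    (Ωt Ωtinv : M ⊗[ℂ] M)
    (hΩt : Ωt = (TensorProduct.map R R) ((TensorProduct.comm ℂ M M) Ωinv))
    (hΩtinv : Ωtinv = (TensorProduct.map R R) ((TensorProduct.comm ℂ M M) Ω))
    (X Xinv : M) (hX : X * Xinv = 1) (hX' : Xinv * X = 1)
    (hXrel : Ωinv * (X ⊗ₜ[ℂ] X) = Δ X * Ωtinv) :
    (((1 : M) ⊗ₜ[ℂ] Ωt) * (TensorProduct.map LinearMap.id Δ.toLinearMap Ωt)
        = (TensorProduct.assoc ℂ M M M)
            ((Ωt ⊗ₜ[ℂ] (1 : M)) * (TensorProduct.map Δ.toLinearMap LinearMap.id Ωt)))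
    ∧ ∀ m : M,
        Ωt * Δ m * Ωtinv
          = (Xinv ⊗ₜ[ℂ] Xinv) * (Ω * Δ (X * m * Xinv) * Ωinv) * (X ⊗ₜ[ℂ] X) := by
  -- the "flip then apply R⊗R" map
  set F : M ⊗[ℂ] M →ₗ[ℂ] M ⊗[ℂ] M :=
    (TensorProduct.map R R) ∘ₗ (TensorProduct.comm ℂ M M).toLinearMap with hFdef
  have hFapp : ∀ w : M ⊗[ℂ] M,
      F w = TensorProduct.map R R ((TensorProduct.comm ℂ M M) w) := fun _ => rfl
  have hFt : ∀ a b : M, F (a ⊗ₜ[ℂ] b) = R b ⊗ₜ[ℂ] R a := by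
    intro a b
    simp only [hFdef, LinearMap.coe_comp, Function.comp_apply, LinearEquiv.coe_coe,
      TensorProduct.comm_tmul, TensorProduct.map_tmul]
  have hFanti : ∀ x y : M ⊗[ℂ] M, F (x * y) = F y * F x := by
    intro x y
    simpa only [hFapp] using tp_swap_antimul R R hR_antimul hR_antimul x y
  have hFone : F (1 : M ⊗[ℂ] M) = 1 := by
    rw [Algebra.TensorProduct.one_def, hFt, hR_one]
  have hΩtF : Ωt = F Ωinv := by rw [hΩt, hFapp]
  have hΩtinvF : Ωtinv = F Ω := by rw [hΩtinv, hFapp]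
  -- Ωt, Ωtinv mutually inverse
  have hT1 : Ωt * Ωtinv = 1 := by
    rw [hΩtF, hΩtinvF, ← hFanti, hΩ, hFone]
  have hT2 : Ωtinv * Ωt = 1 := by
    rw [hΩtF, hΩtinvF, ← hFanti, hΩ', hFone]
  -- Δ X invertible
  have hDX1 : Δ X * Δ Xinv = 1 := by rw [← map_mul, hX, map_one]
  have hDX2 : Δ Xinv * Δ X = 1 := by rw [← map_mul, hX', map_one]
  have hXX1 : (X ⊗ₜ[ℂ] X) * (Xinv ⊗ₜ[ℂ] Xinv) = 1 := by
    rw [Algebra.TensorProduct.tmul_mul_tmul, hX, Algebra.TensorProduct.one_def]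
  have hXX2 : (Xinv ⊗ₜ[ℂ] Xinv) * (X ⊗ₜ[ℂ] X) = 1 := by
    rw [Algebra.TensorProduct.tmul_mul_tmul, hX', Algebra.TensorProduct.one_def]
  -- explicit formulas for Ωt, Ωtinv
  have hΩtinv_eq : Ωtinv = Δ Xinv * Ωinv * (X ⊗ₜ[ℂ] X) := by
    calc Ωtinv = (Δ Xinv * Δ X) * Ωtinv := by rw [hDX2, one_mul]
    _ = Δ Xinv * (Δ X * Ωtinv) := by rw [mul_assoc]
    _ = Δ Xinv * (Ωinv * (X ⊗ₜ[ℂ] X)) := by rw [hXrel]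
    _ = Δ Xinv * Ωinv * (X ⊗ₜ[ℂ] X) := by rw [mul_assoc]
  have hcand : ((Xinv ⊗ₜ[ℂ] Xinv) * Ω * Δ X) * Ωtinv = 1 := by
    calc ((Xinv ⊗ₜ[ℂ] Xinv) * Ω * Δ X) * Ωtinv
        = (Xinv ⊗ₜ[ℂ] Xinv) * Ω * (Δ X * Ωtinv) := by rw [mul_assoc]
      _ = (Xinv ⊗ₜ[ℂ] Xinv) * Ω * (Ωinv * (X ⊗ₜ[ℂ] X)) := by rw [← hXrel]
      _ = (Xinv ⊗ₜ[ℂ] Xinv) * (Ω * Ωinv) * (X ⊗ₜ[ℂ] X) := by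
          simp only [mul_assoc]
      _ = 1 := by rw [hΩ, mul_one, hXX2]
  have hΩt_eq : Ωt = (Xinv ⊗ₜ[ℂ] Xinv) * Ω * Δ X := by
    calc Ωt = (((Xinv ⊗ₜ[ℂ] Xinv) * Ω * Δ X) * Ωtinv) * Ωt := by rw [hcand, one_mul]
      _ = ((Xinv ⊗ₜ[ℂ] Xinv) * Ω * Δ X) * (Ωtinv * Ωt) := by rw [mul_assoc]
      _ = (Xinv ⊗ₜ[ℂ] Xinv) * Ω * Δ X := by rw [hT2, mul_one]
  -- Part 2
  have part2 : ∀ m : M,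
      Ωt * Δ m * Ωtinv
        = (Xinv ⊗ₜ[ℂ] Xinv) * (Ω * Δ (X * m * Xinv) * Ωinv) * (X ⊗ₜ[ℂ] X) := by
    intro m
    rw [hΩt_eq, hΩtinv_eq, map_mul, map_mul]
    simp only [mul_assoc]
  refine ⟨?_, part2⟩
  -- Part 1
  set E₁ : M ⊗[ℂ] M →ₗ[ℂ] (M ⊗[ℂ] M) ⊗[ℂ] M :=
    TensorProduct.map Δ.toLinearMap LinearMap.id with hE₁def
  set E₂ : M ⊗[ℂ] M →ₗ[ℂ] M ⊗[ℂ] (M ⊗[ℂ] M) :=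
    TensorProduct.map LinearMap.id Δ.toLinearMap with hE₂def
  have hE₁mul : ∀ x y : M ⊗[ℂ] M, E₁ (x * y) = E₁ x * E₁ y :=
    tp_map_mul Δ.toLinearMap LinearMap.id (fun x y => map_mul Δ x y) (fun _ _ => rfl)
  have hE₂mul : ∀ x y : M ⊗[ℂ] M, E₂ (x * y) = E₂ x * E₂ y :=
    tp_map_mul LinearMap.id Δ.toLinearMap (fun _ _ => rfl) (fun x y => map_mul Δ x y)
  have hE₁one : E₁ (1 : M ⊗[ℂ] M) = 1 := by
    rw [hE₁def]
    rw [Algebra.TensorProduct.one_def, TensorProduct.map_tmul]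
    simp [Algebra.TensorProduct.one_def]
  have hE₂one : E₂ (1 : M ⊗[ℂ] M) = 1 := by
    rw [hE₂def]
    rw [Algebra.TensorProduct.one_def, TensorProduct.map_tmul]
    simp [Algebra.TensorProduct.one_def]
  -- the triple reversal map
  set G : M ⊗[ℂ] (M ⊗[ℂ] M) →ₗ[ℂ] (M ⊗[ℂ] M) ⊗[ℂ] M :=
    (TensorProduct.map F R) ∘ₗ (TensorProduct.comm ℂ M (M ⊗[ℂ] M)).toLinearMap with hGdef
  have hGt : ∀ (a : M) (t : M ⊗[ℂ] M), G (a ⊗ₜ[ℂ] t) = F t ⊗ₜ[ℂ] R a := by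
    intro a t
    simp only [hGdef, LinearMap.coe_comp, Function.comp_apply, LinearEquiv.coe_coe,
      TensorProduct.comm_tmul, TensorProduct.map_tmul]
  have hGanti : ∀ x y : M ⊗[ℂ] (M ⊗[ℂ] M), G (x * y) = G y * G x := by
    intro x y
    simpa only [hGdef, LinearMap.coe_comp, Function.comp_apply, LinearEquiv.coe_coe]
      using tp_swap_antimul R F hR_antimul hFanti x y
  -- bridging the linear associator with the algebra associator
  have hbridge : ∀ z : (M ⊗[ℂ] M) ⊗[ℂ] M,
      (TensorProduct.assoc ℂ M M M) z = (Algebra.TensorProduct.assoc ℂ ℂ ℂ M M M) z :=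
    fun _ => rfl
  have hassoc_mul : ∀ x y : (M ⊗[ℂ] M) ⊗[ℂ] M,
      (TensorProduct.assoc ℂ M M M) (x * y)
        = (TensorProduct.assoc ℂ M M M) x * (TensorProduct.assoc ℂ M M M) y := by
    intro x y; rw [hbridge, hbridge, hbridge]; exact map_mul _ x y
  have hassoc_one : (TensorProduct.assoc ℂ M M M) (1 : (M ⊗[ℂ] M) ⊗[ℂ] M) = 1 := by
    rw [hbridge]; exact map_one _
  -- structure lemmas for G
  have hL1 : ∀ w : M ⊗[ℂ] M, G ((1 : M) ⊗ₜ[ℂ] w) = F w ⊗ₜ[ℂ] (1 : M) := by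
    intro w; rw [hGt, hR_one]
  have hFΔ : ∀ b : M, F (Δ b) = Δ (R b) := by
    intro b; rw [hΔR, hFapp]
  have hL2 : ∀ w : M ⊗[ℂ] M, G (E₂ w) = E₁ (F w) := by
    intro w
    induction w using TensorProduct.induction_on with
    | zero => simp only [map_zero]
    | tmul a b =>
      rw [hE₂def, TensorProduct.map_tmul, LinearMap.id_coe, id_eq,
        AlgHom.toLinearMap_apply, hGt, hFΔ, hFt,
        hE₁def, TensorProduct.map_tmul, LinearMap.id_coe, id_eq,
        AlgHom.toLinearMap_apply]
    | add u v hu hv => simp only [map_add, hu, hv]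
  have hL3 : ∀ w : M ⊗[ℂ] M,
      G ((TensorProduct.assoc ℂ M M M) (w ⊗ₜ[ℂ] (1 : M)))
        = (TensorProduct.assoc ℂ M M M).symm ((1 : M) ⊗ₜ[ℂ] F w) := by
    intro w
    induction w using TensorProduct.induction_on with
    | zero => simp only [map_zero, zero_tmul, tmul_zero]
    | tmul a b =>
      rw [TensorProduct.assoc_tmul, hGt, hFt, hR_one, hFt, TensorProduct.assoc_symm_tmul]
    | add u v hu hv =>
      simp only [add_tmul, tmul_add, map_add, hu, hv]
  have hL4aux : ∀ (b : M) (v : M ⊗[ℂ] M),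
      G ((TensorProduct.assoc ℂ M M M) (v ⊗ₜ[ℂ] b))
        = (TensorProduct.assoc ℂ M M M).symm (R b ⊗ₜ[ℂ] F v) := by
    intro b v
    induction v using TensorProduct.induction_on with
    | zero => simp only [map_zero, zero_tmul, tmul_zero]
    | tmul p q =>
      rw [TensorProduct.assoc_tmul, hGt, hFt, hFt, TensorProduct.assoc_symm_tmul]
    | add u v hu hv =>
      simp only [add_tmul, tmul_add, map_add, hu, hv]
  have hL4 : ∀ w : M ⊗[ℂ] M,
      G ((TensorProduct.assoc ℂ M M M) (E₁ w))
        = (TensorProduct.assoc ℂ M M M).symm (E₂ (F w)) := by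
    intro w
    induction w using TensorProduct.induction_on with
    | zero => simp only [map_zero]
    | tmul a b =>
      rw [hE₁def, TensorProduct.map_tmul, LinearMap.id_coe, id_eq,
        AlgHom.toLinearMap_apply, hL4aux, hFΔ, hFt,
        hE₂def, TensorProduct.map_tmul, LinearMap.id_coe, id_eq,
        AlgHom.toLinearMap_apply]
    | add u v hu hv => simp only [map_add, hu, hv]
  -- apply G to the cocycle identity for Ω
  have hkey : E₁ Ωtinv * (Ωtinv ⊗ₜ[ℂ] (1 : M))
      = (TensorProduct.assoc ℂ M M M).symm (E₂ Ωtinv)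
        * (TensorProduct.assoc ℂ M M M).symm ((1 : M) ⊗ₜ[ℂ] Ωtinv) := by
    have h := congrArg G hcocycle
    rw [hGanti, hL2, hL1, hassoc_mul, hGanti, hL4, hL3] at h
    rw [hΩtinvF]
    exact h
  have hstar : (TensorProduct.assoc ℂ M M M) (E₁ Ωtinv * (Ωtinv ⊗ₜ[ℂ] (1 : M)))
      = E₂ Ωtinv * ((1 : M) ⊗ₜ[ℂ] Ωtinv) := by
    rw [hkey, hassoc_mul, LinearEquiv.apply_symm_apply, LinearEquiv.apply_symm_apply]
  -- now conclude by uniqueness of inverses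
  have huv : (((1 : M) ⊗ₜ[ℂ] Ωt) * E₂ Ωt) * (E₂ Ωtinv * ((1 : M) ⊗ₜ[ℂ] Ωtinv)) = 1 := by
    calc (((1 : M) ⊗ₜ[ℂ] Ωt) * E₂ Ωt) * (E₂ Ωtinv * ((1 : M) ⊗ₜ[ℂ] Ωtinv))
        = ((1 : M) ⊗ₜ[ℂ] Ωt) * (E₂ Ωt * E₂ Ωtinv) * ((1 : M) ⊗ₜ[ℂ] Ωtinv) := by
          simp only [mul_assoc]
      _ = ((1 : M) ⊗ₜ[ℂ] Ωt) * ((1 : M) ⊗ₜ[ℂ] Ωtinv) := by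
          rw [← hE₂mul, hT1, hE₂one, mul_one]
      _ = 1 := by
          rw [Algebra.TensorProduct.tmul_mul_tmul, one_mul, hT1]
          rfl
  have hvu : (E₂ Ωtinv * ((1 : M) ⊗ₜ[ℂ] Ωtinv))
      * ((TensorProduct.assoc ℂ M M M) ((Ωt ⊗ₜ[ℂ] (1 : M)) * E₁ Ωt)) = 1 := by
    rw [← hstar, ← hassoc_mul]
    have hinner : (E₁ Ωtinv * (Ωtinv ⊗ₜ[ℂ] (1 : M))) * ((Ωt ⊗ₜ[ℂ] (1 : M)) * E₁ Ωt)
        = 1 := by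
      calc (E₁ Ωtinv * (Ωtinv ⊗ₜ[ℂ] (1 : M))) * ((Ωt ⊗ₜ[ℂ] (1 : M)) * E₁ Ωt)
          = E₁ Ωtinv * ((Ωtinv ⊗ₜ[ℂ] (1 : M)) * (Ωt ⊗ₜ[ℂ] (1 : M))) * E₁ Ωt := by
            simp only [mul_assoc]
        _ = E₁ Ωtinv * E₁ Ωt := by
            rw [Algebra.TensorProduct.tmul_mul_tmul, hT2, one_mul,
              show ((1 : M ⊗[ℂ] M) ⊗ₜ[ℂ] (1 : M)) = (1 : (M ⊗[ℂ] M) ⊗[ℂ] M) from rfl,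
              mul_one]
        _ = 1 := by rw [← hE₁mul, hT2, hE₁one]
    rw [hinner, hassoc_one]
  calc ((1 : M) ⊗ₜ[ℂ] Ωt) * E₂ Ωt
      = (((1 : M) ⊗ₜ[ℂ] Ωt) * E₂ Ωt)
        * ((E₂ Ωtinv * ((1 : M) ⊗ₜ[ℂ] Ωtinv))
          * ((TensorProduct.assoc ℂ M M M) ((Ωt ⊗ₜ[ℂ] (1 : M)) * E₁ Ωt))) := by
        rw [hvu, mul_one]
    _ = ((((1 : M) ⊗ₜ[ℂ] Ωt) * E₂ Ωt) * (E₂ Ωtinv * ((1 : M) ⊗ₜ[ℂ] Ωtinv)))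
        * ((TensorProduct.assoc ℂ M M M) ((Ωt ⊗ₜ[ℂ] (1 : M)) * E₁ Ωt)) := by
        simp only [mul_assoc]
    _ = (TensorProduct.assoc ℂ M M M) ((Ωt ⊗ₜ[ℂ] (1 : M)) * E₁ Ωt) := by
        rw [huv, one_mul]
end

section
/- Suppose v is a unitary with v_t = P_N^{it} P^{-it} where P_N^{it} and P^{it} are one-parameter unitary groups, and suppose G̃ is a unitary satisfying G̃ (P_N^{it} ⊗ P_N^{it}) = (P^{it} ⊗ P_N^{it}) G̃ and Ŵ (P^{it} ⊗ P^{it}) = (P^{it} ⊗ P^{it}) Ŵ with G̃ = Ŵ Ω* for a unitary Ω. Then Ω*(v_t ⊗ v_t) = Δ̂(v_t)(τ̂_t ⊗ τ̂_t)(Ω*), where Δ̂(m) = Ŵ*(1 ⊗ m)Ŵ and τ̂_t(m) = P^{it} m P^{-it}. -/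
open TensorProduct

/-! Write `v_t ⊗ v_t = (P_N^{it} ⊗ P_N^{it})(P^{-it} ⊗ P^{-it})`. Since `G̃ = ŴΩ*` intertwines
`P_N^{it} ⊗ P_N^{it}` with `P^{it} ⊗ P_N^{it}`, we get
`Ω*(P_N^{it} ⊗ P_N^{it}) = Ŵ*(P^{it} ⊗ P_N^{it})ŴΩ*`.
Now `P^{it} ⊗ P_N^{it} = (1 ⊗ v_t)(P^{it} ⊗ P^{it})`, and `P^{it} ⊗ P^{it}` commutes with `Ŵ`. -/

namespace LinearMap

variable {R M N : Type*} [CommSemiring R] [AddCommMonoid M] [Module R M]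
  [AddCommMonoid N] [Module R N]

lemma neg_comp_self_of_map_add {G : Type*} [AddGroup G] (P : G → M →ₗ[R] M)
    (hadd : ∀ s t, P (s + t) = P s ∘ₗ P t) (hzero : P 0 = id) (t : G) :
    P (-t) ∘ₗ P t = id := by
  rw [← hadd, neg_add_cancel, hzero]

lemma comp_eq_conj_of_intertwines {W Winv : N →ₗ[R] N} (hW : Winv ∘ₗ W = id)
    {X : M →ₗ[R] N} {A : M →ₗ[R] M} {B : N →ₗ[R] N}
    (h : (W ∘ₗ X) ∘ₗ A = B ∘ₗ W ∘ₗ X) :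
    X ∘ₗ A = Winv ∘ₗ B ∘ₗ W ∘ₗ X := by
  rw [← h, ← comp_assoc, ← comp_assoc, hW, id_comp]

end LinearMap

theorem v_coboundary_identity_general {H : Type*} [AddCommGroup H] [Module ℂ H]
    (P PN : ℝ → (H →ₗ[ℂ] H))
    (hPgrp : ∀ s t : ℝ, P (s + t) = P s ∘ₗ P t) (hP0 : P 0 = LinearMap.id)
    (Ωinv What Whatinv : H ⊗[ℂ] H →ₗ[ℂ] H ⊗[ℂ] H)
    (hW2 : Whatinv ∘ₗ What = LinearMap.id)
    (hWP : ∀ t : ℝ,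
      What ∘ₗ TensorProduct.map (P t) (P t) = TensorProduct.map (P t) (P t) ∘ₗ What)
    (v : ℝ → (H →ₗ[ℂ] H))
    (hv : ∀ t : ℝ, v t = PN t ∘ₗ P (-t))
    (Gtilde : H ⊗[ℂ] H →ₗ[ℂ] H ⊗[ℂ] H)
    (hGtilde : Gtilde = What ∘ₗ Ωinv)
    (hGP : ∀ t : ℝ,
      Gtilde ∘ₗ TensorProduct.map (PN t) (PN t)
        = TensorProduct.map (P t) (PN t) ∘ₗ Gtilde) :
    ∀ t : ℝ,
      Ωinv ∘ₗ TensorProduct.map (v t) (v t)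
        = (Whatinv ∘ₗ LinearMap.lTensor H (v t) ∘ₗ What) ∘ₗ
            (TensorProduct.map (P t) (P t) ∘ₗ Ωinv ∘ₗ
              TensorProduct.map (P (-t)) (P (-t))) := by
  intro t
  have hsplit : map (P t) (PN t) = LinearMap.lTensor H (v t) ∘ₗ map (P t) (P t) := by
    rw [LinearMap.lTensor_comp_map, hv, LinearMap.comp_assoc,
      LinearMap.neg_comp_self_of_map_add P hPgrp hP0, LinearMap.comp_id]
  have hintertwine : Ωinv ∘ₗ map (PN t) (PN t)
      = Whatinv ∘ₗ map (P t) (PN t) ∘ₗ What ∘ₗ Ωinv :=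
    LinearMap.comp_eq_conj_of_intertwines hW2 (hGtilde ▸ hGP t)
  calc Ωinv ∘ₗ map (v t) (v t)
      = (Ωinv ∘ₗ map (PN t) (PN t)) ∘ₗ map (P (-t)) (P (-t)) := by
        rw [hv, map_comp, LinearMap.comp_assoc]
    _ = Whatinv ∘ₗ LinearMap.lTensor H (v t) ∘ₗ (map (P t) (P t) ∘ₗ What) ∘ₗ
          Ωinv ∘ₗ map (P (-t)) (P (-t)) := by
        rw [hintertwine, hsplit]
        simp only [LinearMap.comp_assoc]
    _ = _ := by
        rw [← hWP t]
        simp only [LinearMap.comp_assoc]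

/-- Let `v_t = P_N^{it} P^{-it}`, with `G̃ = Ŵ Ω*` a unitary
satisfying `G̃ (P_N^{it} ⊗ P_N^{it}) = (P^{it} ⊗ P_N^{it}) G̃` and
`Ŵ (P^{it} ⊗ P^{it}) = (P^{it} ⊗ P^{it}) Ŵ`.  Then
`Ω*(v_t ⊗ v_t) = Δ̂(v_t)·(τ̂_t ⊗ τ̂_t)(Ω*)`, where `Δ̂(m) = Ŵ*(1 ⊗ m)Ŵ` and
`τ̂_t(m) = P^{it} m P^{-it}`. -/
theorem v_coboundary_identity {H : Type*} [AddCommGroup H] [Module ℂ H]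
    (P PN : ℝ → (H →ₗ[ℂ] H))
    (hPgrp : ∀ s t : ℝ, P (s + t) = P s ∘ₗ P t) (hP0 : P 0 = LinearMap.id)
    (hPNgrp : ∀ s t : ℝ, PN (s + t) = PN s ∘ₗ PN t) (hPN0 : PN 0 = LinearMap.id)
    (Ω Ωinv What Whatinv : H ⊗[ℂ] H →ₗ[ℂ] H ⊗[ℂ] H)
    (hΩ1 : Ω ∘ₗ Ωinv = LinearMap.id) (hΩ2 : Ωinv ∘ₗ Ω = LinearMap.id)
    (hW1 : What ∘ₗ Whatinv = LinearMap.id) (hW2 : Whatinv ∘ₗ What = LinearMap.id)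
    (hWP : ∀ t : ℝ,
      What ∘ₗ TensorProduct.map (P t) (P t) = TensorProduct.map (P t) (P t) ∘ₗ What)
    (v : ℝ → (H →ₗ[ℂ] H))
    (hv : ∀ t : ℝ, v t = PN t ∘ₗ P (-t))
    (Gtilde : H ⊗[ℂ] H →ₗ[ℂ] H ⊗[ℂ] H)
    (hGtilde : Gtilde = What ∘ₗ Ωinv)
    (hGP : ∀ t : ℝ,
      Gtilde ∘ₗ TensorProduct.map (PN t) (PN t)
        = TensorProduct.map (P t) (PN t) ∘ₗ Gtilde) :
    ∀ t : ℝ,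
      Ωinv ∘ₗ TensorProduct.map (v t) (v t)
        = (Whatinv ∘ₗ LinearMap.lTensor H (v t) ∘ₗ What) ∘ₗ
            (TensorProduct.map (P t) (P t) ∘ₗ Ωinv ∘ₗ
              TensorProduct.map (P (-t)) (P (-t))) :=
  v_coboundary_identity_general P PN hPgrp hP0 Ωinv What Whatinv hW2 hWP v hv Gtilde hGtilde hGP
end
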